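/- Let E be a homogeneous Moran set with parameters ([0,1], {n_k}, {r_k}) such that Δ_k > 0 for all k and γ := inf_{k≥1} Δ_k/Δ_{k+1} > 1. Then for every k ≥ 1 and every connected component U of the k-th approximation E_k, the set U ∩ E is (2/(γ−1))·Δ_k-connected; indeed, every complementary gap of U ∩ E has length at most 2·Σ_{j=1}^{∞} Δ_{k+j} ≤ (2/(γ−1))·Δ_k. -/

import Mathlib

/-!
A complementary gap `(a, b)` of `U ∩ E` lies in the component `U` of `E_k` and misses `E`, so each
of its points leaves the approximations at some rank `m ≥ k`, i.e. lies in `E_m \ E_{m+1}`. A basic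
interval of rank `m` meeting `(a, b)` contains `a` or `b`, since otherwise it would sit inside the
gap although every basic interval meets `E`; as basic intervals of one rank have disjoint
interiors, at most one of them contains `a` and meets `(a, b)`, and likewise for `b`. Each basic
interval of rank `m` loses measure at most `Δ_{m+1}` to `E_{m+1}`, hence
`b - a ≤ 2 Σ_{j ≥ 1} Δ_{k+j}`, and `Δ_{m+1} ≤ Δ_m / γ` sums this to at most `2 Δ_k / (γ - 1)`.

A closed set `X ⊆ ℝ` whose gaps are all at most `δ` is `δ`-connected: the supremum `s` of the points
of `X ∩ [x, y]` reachable from `x` by `δ`-chains is itself reachable, and if `s < y` the next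
point of `X` after `s` is within `δ` of it.
-/

open Set MeasureTheory
open scoped ENNReal

/-- `σ = (σ₁, …, σ_k)` is a valid word for the sequence `n`: its `i`-th entry
(1-based position `i+1` for 0-based index `i`) is smaller than `n (i+1)`. -/
def IsWord (n : ℕ → ℕ) (σ : List ℕ) : Prop :=
  ∀ i : Fin σ.length, σ.get i < n (i + 1)

/-- A homogeneous Moran structure with parameters `([0,1], {n_k}, {r_k})`:
a family of closed intervals `J σ` indexed by words, with `J ∅ = [0,1]`,
nested, with pairwise disjoint interiors at each level, and
`|J (σ*i)| = r_{k} |J σ|` for `σ` of length `k-1`. -/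
structure MoranStructure (n : ℕ → ℕ) (r : ℕ → ℝ) where
  J : List ℕ → Set ℝ
  J_empty : J [] = Set.Icc 0 1
  J_closedInterval : ∀ σ : List ℕ, IsWord n σ → ∃ a b : ℝ, a ≤ b ∧ J σ = Set.Icc a b
  J_subset : ∀ σ : List ℕ, IsWord n σ → ∀ i < n (σ.length + 1), J (σ ++ [i]) ⊆ J σ
  J_disjointInterior : ∀ σ : List ℕ, IsWord n σ → ∀ i < n (σ.length + 1),
      ∀ j < n (σ.length + 1), i ≠ j →
      interior (J (σ ++ [i])) ∩ interior (J (σ ++ [j])) = ∅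
  J_diam : ∀ σ : List ℕ, IsWord n σ → ∀ i < n (σ.length + 1),
      Metric.diam (J (σ ++ [i])) = r (σ.length + 1) * Metric.diam (J σ)

variable {n : ℕ → ℕ} {r : ℕ → ℝ}

/-- The `k`-th approximation `E_k`: the union of all basic intervals of rank `k`. -/
def MoranStructure.approx (M : MoranStructure n r) (k : ℕ) : Set ℝ :=
  ⋃ σ ∈ {σ : List ℕ | σ.length = k ∧ IsWord n σ}, M.J σ

/-- The homogeneous Moran set `E = ⋂_k E_k`. -/
def MoranStructure.moranSet (M : MoranStructure n r) : Set ℝ :=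
  ⋂ k, M.approx k

/-- The total gap of rank `k`: `Δ_k = r_1 ⋯ r_{k-1} (1 - n_k r_k)`. -/
noncomputable def totalGap (n : ℕ → ℕ) (r : ℕ → ℝ) (k : ℕ) : ℝ :=
  (∏ j ∈ Finset.Icc 1 (k - 1), r j) * (1 - (n k : ℝ) * r k)

/-- Distance between two subsets of `ℝ`: `dist(A,B) = inf {|x-y| : x ∈ A, y ∈ B}`. -/
noncomputable def setDist (A B : Set ℝ) : ℝ :=
  sInf {d : ℝ | ∃ x ∈ A, ∃ y ∈ B, d = |x - y|}

/-- The weak separation condition with constant `η₀`. -/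
def MoranStructure.WSC (M : MoranStructure n r) (η₀ : ℝ) : Prop :=
  ∀ σ : List ℕ, IsWord n σ → ∀ i < n (σ.length + 1), ∀ j < n (σ.length + 1), i ≠ j →
    (M.J (σ ++ [i]) ∩ M.J (σ ++ [j])).Nonempty ∨
      setDist (M.J (σ ++ [i])) (M.J (σ ++ [j])) >
        η₀ * (Metric.diam (M.J σ) -
          ∑ m ∈ Finset.range (n (σ.length + 1)), Metric.diam (M.J (σ ++ [m])))

/-- `μ` is the uniform Bernoulli measure of the Moran structure `M`:
a Borel probability measure concentrated on the Moran set, giving each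
cylinder of rank `k` measure `1/(n_1 ⋯ n_k)`. -/
def IsUniformBernoulli (M : MoranStructure n r) (μ : Measure ℝ) : Prop :=
  IsProbabilityMeasure μ ∧ μ M.moranSetᶜ = 0 ∧
    ∀ σ : List ℕ, IsWord n σ →
      μ (M.J σ ∩ M.moranSet) = 1 / ∏ j ∈ Finset.Icc 1 σ.length, (n j : ℝ≥0∞)

/-- `I` is a connected component of the set `S ⊆ ℝ`. -/
def IsCC (S I : Set ℝ) : Prop := ∃ x ∈ S, I = connectedComponentIn S x

/-- `X` is `δ`-connected: any two points of `X` are joined by a finite chain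
of points of `X` with consecutive distances at most `δ`. -/
def DeltaConnected (δ : ℝ) (X : Set ℝ) : Prop :=
  ∀ x ∈ X, ∀ y ∈ X, ∃ (m : ℕ) (z : Fin (m + 1) → ℝ),
    (∀ i, z i ∈ X) ∧ z 0 = x ∧ z (Fin.last m) = y ∧
      ∀ i : Fin m, |z i.castSucc - z i.succ| ≤ δ

lemma ENNReal.ofReal_sub_ofReal_le (p q : ℝ) :
    ENNReal.ofReal p - ENNReal.ofReal q ≤ ENNReal.ofReal (p - q) :=
  tsub_le_iff_right.mpr <| by
    simpa only [sub_add_cancel] using ENNReal.ofReal_add_le (p := p - q) (q := q)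

lemma List.exists_eq_append_cons_of_length_eq_of_ne {α : Type*} :
    ∀ {σ₁ σ₂ : List α}, σ₁.length = σ₂.length → σ₁ ≠ σ₂ →
      ∃ τ ρ₁ ρ₂ i j, i ≠ j ∧ σ₁ = τ ++ i :: ρ₁ ∧ σ₂ = τ ++ j :: ρ₂
  | [], [], _, hne => absurd rfl hne
  | a :: l₁, b :: l₂, hlen, hne => by
    by_cases hab : a = b
    · subst hab
      obtain ⟨τ, ρ₁, ρ₂, i, j, hij, rfl, rfl⟩ :=
        exists_eq_append_cons_of_length_eq_of_ne (by simpa using hlen) (by simpa using hne)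
      exact ⟨a :: τ, ρ₁, ρ₂, i, j, hij, rfl, rfl⟩
    · exact ⟨[], l₁, l₂, a, b, hab, rfl, rfl⟩

lemma Antitone.exists_mem_diff_succ {α : Type*} {A : ℕ → Set α} (hA : Antitone A) {k : ℕ}
    {x : α} (hx : x ∈ A k) (hx' : x ∉ ⋂ m, A m) : ∃ j, x ∈ A (k + j) \ A (k + j + 1) := by
  by_contra! h
  have hall : ∀ j, x ∈ A (k + j) := fun j => by
    induction j with
    | zero => exact hx
    | succ j ih => exact of_not_not fun hj => h j ⟨ih, hj⟩
  exact hx' (Set.mem_iInter.mpr fun m => hA (Nat.le_add_left m k) (hall m))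

lemma IsClosed.connectedComponentIn {α : Type*} [TopologicalSpace α] {F : Set α}
    (hF : IsClosed F) (x : α) : IsClosed (connectedComponentIn F x) := by
  by_cases hx : x ∈ F
  · refine isClosed_of_closure_subset <| isPreconnected_connectedComponentIn.closure
      |>.subset_connectedComponentIn (subset_closure (mem_connectedComponentIn hx)) ?_
    exact hF.closure_subset_iff.mpr (connectedComponentIn_subset _ _)
  · simp [connectedComponentIn_eq_empty hx]

lemma summable_and_tsum_succ_le_of_mul_succ_le {g : ℕ → ℝ} {γ : ℝ} (hγ : 1 < γ)
    (hg : ∀ j, 0 ≤ g j) (hstep : ∀ j, γ * g (j + 1) ≤ g j) :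
    (Summable fun j => g (j + 1)) ∧ ∑' j, g (j + 1) ≤ g 0 / (γ - 1) := by
  have hγ0 : 0 < γ := zero_lt_one.trans hγ
  have hq : γ⁻¹ < 1 := inv_lt_one_of_one_lt₀ hγ
  have hgeom : ∀ j, g (j + 1) ≤ g 0 / γ * γ⁻¹ ^ j := by
    intro j
    induction j with
    | zero => simpa [le_div_iff₀ hγ0, mul_comm] using hstep 0
    | succ j ih =>
      rw [pow_succ, ← mul_assoc, le_mul_inv_iff₀ hγ0, mul_comm]
      exact (hstep (j + 1)).trans ih
  have hsum : Summable fun j => g 0 / γ * γ⁻¹ ^ j :=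
    (summable_geometric_of_lt_one (by positivity) hq).mul_left _
  have hsumg : Summable fun j => g (j + 1) := hsum.of_nonneg_of_le (fun j => hg _) hgeom
  refine ⟨hsumg, (hsumg.tsum_le_tsum hgeom hsum).trans_eq ?_⟩
  rw [tsum_mul_left, tsum_geometric_of_lt_one (by positivity) hq]
  field_simp

def DeltaChain (X : Set ℝ) (δ x y : ℝ) : Prop :=
  ∃ (m : ℕ) (z : Fin (m + 1) → ℝ),
    (∀ i, z i ∈ X) ∧ z 0 = x ∧ z (Fin.last m) = y ∧
      ∀ i : Fin m, |z i.castSucc - z i.succ| ≤ δ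

namespace DeltaChain

variable {X : Set ℝ} {δ : ℝ}

lemma refl {x : ℝ} (hx : x ∈ X) : DeltaChain X δ x x :=
  ⟨0, fun _ => x, fun _ => hx, rfl, rfl, Fin.elim0⟩

lemma snoc {x y z : ℝ} (h : DeltaChain X δ x y) (hz : z ∈ X) (hyz : |y - z| ≤ δ) :
    DeltaChain X δ x z := by
  obtain ⟨m, w, hwX, hw0, hwm, hstep⟩ := h
  refine ⟨m + 1, Fin.snoc w z, fun i => ?_, by simpa using hw0, Fin.snoc_last _ _, fun i => ?_⟩
  · induction i using Fin.lastCases <;> simp [hz, hwX]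
  · induction i using Fin.lastCases
    · simpa [hwm] using hyz
    · rw [Fin.succ_castSucc, Fin.snoc_castSucc, Fin.snoc_castSucc]; exact hstep _

lemma symm {x y : ℝ} (h : DeltaChain X δ x y) : DeltaChain X δ y x := by
  obtain ⟨m, w, hwX, hw0, hwm, hstep⟩ := h
  refine ⟨m, fun i => w i.rev, fun i => hwX _, by simpa using hwm, by simpa using hw0, fun i => ?_⟩
  simpa [Fin.rev_castSucc, Fin.rev_succ, abs_sub_comm] using hstep i.rev

end DeltaChain

section GapBounded

variable {X : Set ℝ} {δ : ℝ}

lemma exists_mem_Ioc_sub_le_of_gap_le (hX : IsClosed X)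
    (hgap : ∀ a ∈ X, ∀ b ∈ X, a < b → Set.Ioo a b ∩ X = ∅ → b - a ≤ δ) (hδ : 0 < δ)
    {s y : ℝ} (hs : s ∈ X) (hy : y ∈ X) (hsy : s < y) :
    ∃ u ∈ X, u ∈ Set.Ioc s y ∧ u - s ≤ δ := by
  set T := X ∩ Set.Ioc s y
  have hTne : T.Nonempty := ⟨y, hy, hsy, le_rfl⟩
  have hTbdd : BddBelow T := ⟨s, fun t ht => ht.2.1.le⟩
  have ht : sInf T ∈ X ∩ Set.Icc s y :=
    (hX.inter isClosed_Icc).closure_subset_iff.mpr (fun t ht => ⟨ht.1, ht.2.1.le, ht.2.2⟩)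
      (csInf_mem_closure hTne hTbdd)
  rcases ht.2.1.eq_or_lt with heq | hlt
  · obtain ⟨u, hu, hus⟩ := exists_lt_of_csInf_lt hTne (show sInf T < s + δ by linarith)
    exact ⟨u, hu.1, hu.2, by linarith⟩
  · have hempty : Set.Ioo s (sInf T) ∩ X = ∅ := Set.eq_empty_of_forall_notMem
      fun z ⟨hz, hzX⟩ => (csInf_le hTbdd ⟨hzX, hz.1, hz.2.le.trans ht.2.2⟩).not_gt hz.2
    exact ⟨sInf T, ht.1, ⟨hlt, ht.2.2⟩, hgap s hs _ ht.1 hlt hempty⟩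

lemma deltaChain_of_gap_le (hX : IsClosed X)
    (hgap : ∀ a ∈ X, ∀ b ∈ X, a < b → Set.Ioo a b ∩ X = ∅ → b - a ≤ δ) (hδ : 0 < δ)
    {x y : ℝ} (hx : x ∈ X) (hy : y ∈ X) (hxy : x ≤ y) : DeltaChain X δ x y := by
  set S := {t | t ∈ X ∩ Set.Icc x y ∧ DeltaChain X δ x t}
  have hSne : S.Nonempty := ⟨x, ⟨hx, le_rfl, hxy⟩, .refl hx⟩
  have hSbdd : BddAbove S := ⟨y, fun t ht => ht.1.2.2⟩
  have hs : sSup S ∈ X ∩ Set.Icc x y :=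
    (hX.inter isClosed_Icc).closure_subset_iff.mpr (fun t ht => ht.1) (csSup_mem_closure hSne hSbdd)
  have hchain : DeltaChain X δ x (sSup S) := by
    obtain ⟨t, ht, hts⟩ := exists_lt_of_lt_csSup hSne (show sSup S - δ < sSup S by linarith)
    exact ht.2.snoc hs.1 (abs_sub_le_iff.mpr ⟨by linarith [le_csSup hSbdd ht], by linarith⟩)
  rcases hs.2.2.eq_or_lt with heq | hlt
  · exact heq ▸ hchain
  · obtain ⟨u, hu, hus, hud⟩ := exists_mem_Ioc_sub_le_of_gap_le hX hgap hδ hs.1 hy hlt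
    have huS : u ∈ S := ⟨⟨hu, hs.2.1.trans hus.1.le, hus.2⟩,
      hchain.snoc hu (abs_sub_le_iff.mpr ⟨by linarith [hus.1], hud⟩)⟩
    exact absurd (le_csSup hSbdd huS) (not_le.mpr hus.1)

lemma deltaConnected_of_gap_le (hX : IsClosed X)
    (hgap : ∀ a ∈ X, ∀ b ∈ X, a < b → Set.Ioo a b ∩ X = ∅ → b - a ≤ δ) (hδ : 0 < δ) :
    DeltaConnected δ X := fun x hx y hy =>
  (le_total x y).elim (deltaChain_of_gap_le hX hgap hδ hx hy)
    fun hyx => (deltaChain_of_gap_le hX hgap hδ hy hx hyx).symm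

end GapBounded

lemma isWord_iff {σ : List ℕ} : IsWord n σ ↔ ∀ m (h : m < σ.length), σ[m] < n (m + 1) :=
  ⟨fun h m hm => h ⟨m, hm⟩, fun h i => h i i.isLt⟩

lemma isWord_append {σ : List ℕ} {i : ℕ} :
    IsWord n (σ ++ [i]) ↔ IsWord n σ ∧ i < n (σ.length + 1) := by
  simp only [isWord_iff, List.length_append, List.length_singleton]
  refine ⟨fun h => ⟨fun m hm => ?_, ?_⟩, fun ⟨hσ, hi⟩ m hm => ?_⟩
  · simpa [List.getElem_append_left hm] using h m (by omega)
  · simpa using h σ.length (by omega)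
  · rcases lt_or_eq_of_le (Nat.le_of_lt_succ hm) with hlt | rfl
    · simpa [List.getElem_append_left hlt] using hσ m hlt
    · simpa using hi

lemma IsWord.of_isPrefix {σ τ : List ℕ} (h : IsWord n σ) (hp : τ <+: σ) : IsWord n τ :=
  isWord_iff.mpr fun m hm => hp.getElem hm ▸ isWord_iff.mp h m (hm.trans_le hp.length_le)

lemma finite_setOf_isWord_length (n : ℕ → ℕ) (k : ℕ) :
    {σ : List ℕ | σ.length = k ∧ IsWord n σ}.Finite := by
  induction k with
  | zero => exact (Set.finite_singleton []).subset fun σ ⟨h, _⟩ => List.length_eq_zero_iff.mp h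
  | succ k ih =>
    refine ((ih.prod (Set.finite_Iio (n (k + 1)))).image fun p => p.1 ++ [p.2]).subset ?_
    rintro σ ⟨hlen, hw⟩
    obtain ⟨τ, i, rfl⟩ := List.eq_nil_or_concat σ |>.resolve_left (by rintro rfl; simp at hlen)
    simp only [List.concat_eq_append, List.length_append, List.length_singleton,
      Nat.add_right_cancel_iff] at hlen hw
    obtain ⟨hτ, hi⟩ := isWord_append.mp hw
    exact ⟨(τ, i), ⟨⟨hlen, hτ⟩, by simpa [hlen] using hi⟩, (List.concat_eq_append ..).symm⟩

namespace MoranStructure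

variable (M : MoranStructure n r)

lemma J_subset_of_isPrefix {σ τ : List ℕ} (hw : IsWord n σ) (hp : τ <+: σ) : M.J σ ⊆ M.J τ := by
  induction σ using List.reverseRecOn with
  | nil => rw [List.prefix_nil.mp hp]
  | append_singleton ρ i ih =>
    obtain ⟨hρ, hi⟩ := isWord_append.mp hw
    rcases le_or_gt τ.length ρ.length with hle | hlt
    · exact (M.J_subset ρ hρ i hi).trans
        (ih hρ (List.prefix_of_prefix_length_le hp (ρ.prefix_append [i]) hle))
    · rw [hp.eq_of_length (le_antisymm hp.length_le (by simpa using hlt))]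

lemma ordConnected_J {σ : List ℕ} (hw : IsWord n σ) : (M.J σ).OrdConnected := by
  obtain ⟨a, b, -, h⟩ := M.J_closedInterval σ hw
  exact h ▸ Set.ordConnected_Icc

lemma diam_J {σ : List ℕ} (hw : IsWord n σ) :
    Metric.diam (M.J σ) = ∏ j ∈ Finset.Icc 1 σ.length, r j := by
  induction σ using List.reverseRecOn with
  | nil => simp [M.J_empty, Real.diam_Icc zero_le_one]
  | append_singleton ρ i ih =>
    obtain ⟨hρ, hi⟩ := isWord_append.mp hw
    rw [M.J_diam ρ hρ i hi, ih hρ, List.length_append, List.length_singleton,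
      Finset.prod_Icc_succ_top (Nat.le_add_left 1 ρ.length), mul_comm]

lemma volume_interior_J {σ : List ℕ} (hw : IsWord n σ) :
    volume (interior (M.J σ)) = ENNReal.ofReal (Metric.diam (M.J σ)) := by
  obtain ⟨a, b, hab, h⟩ := M.J_closedInterval σ hw
  rw [h, interior_Icc, Real.volume_Ioo, Real.diam_Icc hab]

lemma volume_J {σ : List ℕ} (hw : IsWord n σ) :
    volume (M.J σ) = ENNReal.ofReal (Metric.diam (M.J σ)) := by
  obtain ⟨a, b, hab, h⟩ := M.J_closedInterval σ hw
  rw [h, Real.volume_Icc, Real.diam_Icc hab]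

lemma isClosed_approx (k : ℕ) : IsClosed (M.approx k) := by
  refine (finite_setOf_isWord_length n k).isClosed_biUnion fun σ ⟨_, hw⟩ => ?_
  obtain ⟨a, b, -, h⟩ := M.J_closedInterval σ hw
  exact h ▸ isClosed_Icc

lemma isClosed_moranSet : IsClosed M.moranSet := isClosed_iInter M.isClosed_approx

lemma antitone_approx : Antitone M.approx := by
  refine antitone_nat_of_succ_le fun k x hx => ?_
  simp only [approx, Set.mem_iUnion] at hx ⊢
  obtain ⟨σ, ⟨hlen, hw⟩, hx⟩ := hx
  exact ⟨σ.dropLast, ⟨by simp [hlen], hw.of_isPrefix σ.dropLast_prefix⟩,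
    M.J_subset_of_isPrefix hw σ.dropLast_prefix hx⟩

lemma inter_moranSet_nonempty (hn : ∀ k ≥ 1, 0 < n k) {σ : List ℕ} (hw : IsWord n σ) :
    (M.J σ ∩ M.moranSet).Nonempty := by
  set pad : ℕ → List ℕ := fun m => σ ++ List.replicate m 0
  have hext : ∀ m, IsWord n (pad m) := by
    intro m
    induction m with
    | zero => simpa [pad] using hw
    | succ m ih =>
      simp only [pad, List.replicate_succ', ← List.append_assoc] at ih ⊢
      exact isWord_append.mpr ⟨ih, hn _ (by omega)⟩
  have hJ : ∀ m, ∃ a b, a ≤ b ∧ M.J (pad m) = Set.Icc a b := fun m =>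
    M.J_closedInterval _ (hext m)
  obtain ⟨x, hx⟩ := IsCompact.nonempty_iInter_of_sequence_nonempty_isCompact_isClosed
    (fun m => M.J (pad m))
    (fun m => M.J_subset_of_isPrefix (hext (m + 1)) ⟨[0], by simp [pad, List.replicate_succ']⟩)
    (fun m => by obtain ⟨a, b, hab, h⟩ := hJ m; exact h ▸ Set.nonempty_Icc.mpr hab)
    (by obtain ⟨a, b, -, h⟩ := hJ 0; exact h ▸ isCompact_Icc)
    (fun m => by obtain ⟨a, b, -, h⟩ := hJ m; exact h ▸ isClosed_Icc)
  rw [Set.mem_iInter] at hx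
  refine ⟨x, by simpa [pad] using hx 0, Set.mem_iInter.mpr fun m => ?_⟩
  -- `pad m` has length at least `m`, so its prefix of length `m` is a word of rank `m`.
  have hp : (pad m).take m <+: pad m := List.take_prefix _ _
  exact Set.mem_biUnion ⟨by simp [pad], (hext m).of_isPrefix hp⟩
    (M.J_subset_of_isPrefix (hext m) hp (hx m))

lemma interior_J_disjoint {σ₁ σ₂ : List ℕ} (hw₁ : IsWord n σ₁) (hw₂ : IsWord n σ₂)
    (hlen : σ₁.length = σ₂.length) (hne : σ₁ ≠ σ₂) :
    Disjoint (interior (M.J σ₁)) (interior (M.J σ₂)) := by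
  obtain ⟨τ, ρ₁, ρ₂, i, j, hij, rfl, rfl⟩ := List.exists_eq_append_cons_of_length_eq_of_ne hlen hne
  have hp₁ : τ ++ [i] <+: τ ++ i :: ρ₁ := ⟨ρ₁, by simp⟩
  have hp₂ : τ ++ [j] <+: τ ++ j :: ρ₂ := ⟨ρ₂, by simp⟩
  obtain ⟨hτ, hi⟩ := isWord_append.mp (hw₁.of_isPrefix hp₁)
  have hj := (isWord_append.mp (hw₂.of_isPrefix hp₂)).2
  exact (Set.disjoint_iff_inter_eq_empty.mpr (M.J_disjointInterior τ hτ i hi j hj hij)).mono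
    (interior_mono (M.J_subset_of_isPrefix hw₁ hp₁))
    (interior_mono (M.J_subset_of_isPrefix hw₂ hp₂))

lemma eq_of_Icc_subset {σ₁ σ₂ : List ℕ} (hw₁ : IsWord n σ₁) (hw₂ : IsWord n σ₂)
    (hlen : σ₁.length = σ₂.length) {p q : ℝ} (hpq : p < q)
    (h₁ : Set.Icc p q ⊆ M.J σ₁) (h₂ : Set.Icc p q ⊆ M.J σ₂) : σ₁ = σ₂ := by
  by_contra hne
  have hmid : (p + q) / 2 ∈ interior (Set.Icc p q) := by
    rw [interior_Icc]; constructor <;> linarith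
  exact (M.interior_J_disjoint hw₁ hw₂ hlen hne).notMem_of_mem_left
    (interior_mono h₁ hmid) (interior_mono h₂ hmid)

lemma volume_biUnion_interior_J_append {σ : List ℕ} (hw : IsWord n σ) :
    volume (⋃ i ∈ Finset.range (n (σ.length + 1)), interior (M.J (σ ++ [i]))) =
      n (σ.length + 1) * ENNReal.ofReal (r (σ.length + 1) * Metric.diam (M.J σ)) := by
  rw [measure_biUnion_finset
    (fun i hi j hj hij => M.J_disjointInterior σ hw i (Finset.mem_range.mp hi) j
      (Finset.mem_range.mp hj) hij |> Set.disjoint_iff_inter_eq_empty.mpr)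
    (fun _ _ => isOpen_interior.measurableSet)]
  calc ∑ i ∈ Finset.range (n (σ.length + 1)), volume (interior (M.J (σ ++ [i])))
      = ∑ i ∈ Finset.range (n (σ.length + 1)),
          ENNReal.ofReal (r (σ.length + 1) * Metric.diam (M.J σ)) :=
        Finset.sum_congr rfl fun i hi => by
          have hi := Finset.mem_range.mp hi
          rw [M.volume_interior_J (isWord_append.mpr ⟨hw, hi⟩), M.J_diam σ hw i hi]
    _ = _ := by simp

lemma volume_J_diff_approx_le {σ : List ℕ} (hw : IsWord n σ) :
    volume (M.J σ \ M.approx (σ.length + 1)) ≤ ENNReal.ofReal (totalGap n r (σ.length + 1)) := by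
  set N := n (σ.length + 1)
  set D := Metric.diam (M.J σ)
  set children := ⋃ i ∈ Finset.range N, interior (M.J (σ ++ [i]))
  have hvol_children : volume children = N * ENNReal.ofReal (r (σ.length + 1) * D) :=
    M.volume_biUnion_interior_J_append hw
  have hdisj : Disjoint (M.J σ \ M.approx (σ.length + 1)) children := by
    refine Set.disjoint_left.mpr fun x hx hxc => hx.2 ?_
    simp only [children, Set.mem_iUnion, Finset.mem_range] at hxc
    obtain ⟨i, hi, hxi⟩ := hxc
    exact Set.mem_biUnion ⟨by simp, isWord_append.mpr ⟨hw, hi⟩⟩ (interior_subset hxi)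
  have hsub : M.J σ \ M.approx (σ.length + 1) ∪ children ⊆ M.J σ :=
    Set.union_subset Set.sdiff_subset
      (Set.iUnion₂_subset fun i hi => interior_subset.trans
        (M.J_subset σ hw i (Finset.mem_range.mp hi)))
  have hadd : volume (M.J σ \ M.approx (σ.length + 1)) + volume children ≤ ENNReal.ofReal D := by
    rw [← M.volume_J hw, ← measure_union hdisj
      (Finset.measurableSet_biUnion _ fun _ _ => isOpen_interior.measurableSet)]
    exact measure_mono hsub
  calc volume (M.J σ \ M.approx (σ.length + 1))
      ≤ ENNReal.ofReal D - ENNReal.ofReal (N * (r (σ.length + 1) * D)) := by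
        rw [ENNReal.ofReal_mul (Nat.cast_nonneg _), ENNReal.ofReal_natCast, ← hvol_children]
        exact ENNReal.le_sub_of_add_le_right
          (hvol_children ▸ ENNReal.mul_ne_top (by simp) ENNReal.ofReal_ne_top) hadd
    _ ≤ ENNReal.ofReal (D - N * (r (σ.length + 1) * D)) := ENNReal.ofReal_sub_ofReal_le _ _
    _ = ENNReal.ofReal (totalGap n r (σ.length + 1)) := by
        rw [totalGap, Nat.add_sub_cancel, ← M.diam_J hw]
        congr 1; simp only [N, D]; ring

lemma left_mem_J_or_right_mem_J {σ : List ℕ} (hn : ∀ k ≥ 1, 0 < n k) (hw : IsWord n σ) {a b : ℝ}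
    (hE : Set.Ioo a b ∩ M.moranSet = ∅) {x : ℝ} (hx : x ∈ M.J σ ∩ Set.Ioo a b) :
    a ∈ M.J σ ∨ b ∈ M.J σ := by
  by_contra! hab
  have hsub : M.J σ ⊆ Set.Ioo a b := fun z hz => by
    have hJ := M.ordConnected_J hw
    refine ⟨lt_of_not_ge fun hza => hab.1 ?_, lt_of_not_ge fun hbz => hab.2 ?_⟩
    · exact hJ.out hz hx.1 ⟨hza, hx.2.1.le⟩
    · exact hJ.out hx.1 hz ⟨hx.2.2.le, hbz⟩
  obtain ⟨y, hy⟩ := M.inter_moranSet_nonempty hn hw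
  exact (Set.eq_empty_iff_forall_notMem.mp hE) y ⟨hsub hy.1, hy.2⟩

lemma volume_Ioo_inter_approx_diff_le (hn : ∀ k ≥ 1, 0 < n k) {a b : ℝ}
    (hE : Set.Ioo a b ∩ M.moranSet = ∅) (m : ℕ) :
    volume ((Set.Ioo a b ∩ M.approx m) \ M.approx (m + 1)) ≤
      2 * ENNReal.ofReal (totalGap n r (m + 1)) := by
  set S : ℝ → Set (List ℕ) := fun x =>
    {σ | σ.length = m ∧ IsWord n σ ∧ x ∈ M.J σ ∧ (M.J σ ∩ Set.Ioo a b).Nonempty}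
  have hSa : (S a).Subsingleton := by
    rintro σ₁ ⟨hl₁, hw₁, ha₁, y₁, hy₁, hy₁ab⟩ σ₂ ⟨hl₂, hw₂, ha₂, y₂, hy₂, hy₂ab⟩
    refine M.eq_of_Icc_subset hw₁ hw₂ (hl₁.trans hl₂.symm) (lt_min hy₁ab.1 hy₂ab.1) ?_ ?_
    · exact (Set.Icc_subset_Icc_right (min_le_left _ _)).trans ((M.ordConnected_J hw₁).out ha₁ hy₁)
    · exact (Set.Icc_subset_Icc_right (min_le_right _ _)).trans ((M.ordConnected_J hw₂).out ha₂ hy₂)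
  have hSb : (S b).Subsingleton := by
    rintro σ₁ ⟨hl₁, hw₁, hb₁, y₁, hy₁, hy₁ab⟩ σ₂ ⟨hl₂, hw₂, hb₂, y₂, hy₂, hy₂ab⟩
    refine M.eq_of_Icc_subset hw₁ hw₂ (hl₁.trans hl₂.symm) (max_lt hy₁ab.2 hy₂ab.2) ?_ ?_
    · exact (Set.Icc_subset_Icc_left (le_max_left _ _)).trans ((M.ordConnected_J hw₁).out hy₁ hb₁)
    · exact (Set.Icc_subset_Icc_left (le_max_right _ _)).trans ((M.ordConnected_J hw₂).out hy₂ hb₂)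
  have hbound : ∀ x, (S x).Subsingleton →
      volume (⋃ σ ∈ S x, M.J σ \ M.approx (m + 1)) ≤ ENNReal.ofReal (totalGap n r (m + 1)) := by
    intro x hS
    rcases hS.eq_empty_or_singleton with h | ⟨σ, h⟩
    · simp [h]
    · obtain ⟨hl, hw, -⟩ : σ ∈ S x := h ▸ Set.mem_singleton σ
      rw [h, Set.biUnion_singleton, ← hl]
      exact M.volume_J_diff_approx_le hw
  have hcover : (Set.Ioo a b ∩ M.approx m) \ M.approx (m + 1) ⊆
      (⋃ σ ∈ S a, M.J σ \ M.approx (m + 1)) ∪ ⋃ σ ∈ S b, M.J σ \ M.approx (m + 1) := by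
    rintro x ⟨⟨hx, hxm⟩, hxm'⟩
    simp only [approx, Set.mem_iUnion] at hxm
    obtain ⟨σ, ⟨hl, hw⟩, hxσ⟩ := hxm
    rcases M.left_mem_J_or_right_mem_J hn hw hE ⟨hxσ, hx⟩ with h | h
    · exact Or.inl (Set.mem_biUnion ⟨hl, hw, h, x, hxσ, hx⟩ ⟨hxσ, hxm'⟩)
    · exact Or.inr (Set.mem_biUnion ⟨hl, hw, h, x, hxσ, hx⟩ ⟨hxσ, hxm'⟩)
  calc volume ((Set.Ioo a b ∩ M.approx m) \ M.approx (m + 1))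
      ≤ volume (⋃ σ ∈ S a, M.J σ \ M.approx (m + 1)) +
          volume (⋃ σ ∈ S b, M.J σ \ M.approx (m + 1)) :=
        (measure_mono hcover).trans (measure_union_le _ _)
    _ ≤ 2 * ENNReal.ofReal (totalGap n r (m + 1)) := by
        rw [two_mul]; exact add_le_add (hbound a hSa) (hbound b hSb)

lemma volume_Ioo_le_two_mul_tsum_totalGap (hn : ∀ k ≥ 1, 0 < n k) {a b : ℝ} {k : ℕ}
    (hEk : Set.Ioo a b ⊆ M.approx k) (hE : Set.Ioo a b ∩ M.moranSet = ∅) :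
    volume (Set.Ioo a b) ≤ 2 * ∑' j, ENNReal.ofReal (totalGap n r (k + j + 1)) := by
  have hcover : Set.Ioo a b ⊆ ⋃ j, (Set.Ioo a b ∩ M.approx (k + j)) \ M.approx (k + j + 1) :=
    fun x hx => by
      obtain ⟨j, hj⟩ := M.antitone_approx.exists_mem_diff_succ (hEk hx)
        fun hxE => (Set.eq_empty_iff_forall_notMem.mp hE) x ⟨hx, hxE⟩
      exact Set.mem_iUnion.mpr ⟨j, ⟨hx, hj.1⟩, hj.2⟩
  calc volume (Set.Ioo a b)
      ≤ ∑' j, volume ((Set.Ioo a b ∩ M.approx (k + j)) \ M.approx (k + j + 1)) :=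
        (measure_mono hcover).trans (measure_iUnion_le _)
    _ ≤ ∑' j, 2 * ENNReal.ofReal (totalGap n r (k + j + 1)) :=
        ENNReal.tsum_le_tsum fun j => M.volume_Ioo_inter_approx_diff_le hn hE (k + j)
    _ = 2 * ∑' j, ENNReal.ofReal (totalGap n r (k + j + 1)) := ENNReal.tsum_mul_left

lemma sub_le_two_mul_tsum_totalGap (hn : ∀ k ≥ 1, 0 < n k) {k : ℕ}
    (hΔ : ∀ j, 0 ≤ totalGap n r (k + j + 1)) (hsum : Summable fun j => totalGap n r (k + j + 1))
    {a b : ℝ} (hEk : Set.Ioo a b ⊆ M.approx k) (hE : Set.Ioo a b ∩ M.moranSet = ∅) :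
    b - a ≤ 2 * ∑' j, totalGap n r (k + j + 1) := by
  have h := M.volume_Ioo_le_two_mul_tsum_totalGap hn hEk hE
  rwa [Real.volume_Ioo, ← ENNReal.ofReal_tsum_of_nonneg hΔ hsum, ← ENNReal.ofReal_ofNat 2,
    ← ENNReal.ofReal_mul zero_le_two, ENNReal.ofReal_le_ofReal_iff
      (mul_nonneg zero_le_two (tsum_nonneg hΔ))] at h

end MoranStructure

lemma sInf_totalGap_ratio_mul_le (hΔ : ∀ k ≥ 1, 0 < totalGap n r k) {k : ℕ} (hk : 1 ≤ k) :
    sInf {x : ℝ | ∃ k ≥ 1, x = totalGap n r k / totalGap n r (k + 1)} * totalGap n r (k + 1) ≤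
      totalGap n r k := by
  have hbdd : BddBelow {x : ℝ | ∃ k ≥ 1, x = totalGap n r k / totalGap n r (k + 1)} :=
    ⟨0, by rintro x ⟨m, hm, rfl⟩; exact (div_pos (hΔ m hm) (hΔ (m + 1) (by omega))).le⟩
  rw [← le_div_iff₀ (hΔ (k + 1) (by omega))]
  exact csInf_le hbdd ⟨k, hk, rfl⟩

theorem moran_component_deltaConnected_general
    (n : ℕ → ℕ) (r : ℕ → ℝ)
    (hn : ∀ k ≥ 1, 2 ≤ n k)
    (M : MoranStructure n r)
    (hΔ : ∀ k ≥ 1, 0 < totalGap n r k)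
    (γ : ℝ)
    (hγdef : γ = sInf {x : ℝ | ∃ k ≥ 1, x = totalGap n r k / totalGap n r (k + 1)})
    (hγ : 1 < γ) :
    ∀ k ≥ 1, ∀ U : Set ℝ, IsCC (M.approx k) U →
      (∀ a ∈ U ∩ M.moranSet, ∀ b ∈ U ∩ M.moranSet, a < b →
        Set.Ioo a b ∩ (U ∩ M.moranSet) = ∅ →
        b - a ≤ 2 * ∑' j : ℕ, totalGap n r (k + j + 1)) ∧
      2 * ∑' j : ℕ, totalGap n r (k + j + 1) ≤ 2 / (γ - 1) * totalGap n r k ∧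
      DeltaConnected (2 / (γ - 1) * totalGap n r k) (U ∩ M.moranSet) := by
  rintro k hk U ⟨x, -, rfl⟩
  have hn' : ∀ k ≥ 1, 0 < n k := fun k hk => by linarith [hn k hk]
  have hΔnonneg : ∀ j, 0 ≤ totalGap n r (k + j) := fun j => (hΔ _ (by omega)).le
  obtain ⟨hsum, htsum⟩ := summable_and_tsum_succ_le_of_mul_succ_le hγ hΔnonneg
    fun j => hγdef ▸ sInf_totalGap_ratio_mul_le hΔ (by omega : 1 ≤ k + j)
  have hgap : ∀ a ∈ connectedComponentIn (M.approx k) x ∩ M.moranSet,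
      ∀ b ∈ connectedComponentIn (M.approx k) x ∩ M.moranSet, a < b →
      Set.Ioo a b ∩ (connectedComponentIn (M.approx k) x ∩ M.moranSet) = ∅ →
      b - a ≤ 2 * ∑' j, totalGap n r (k + j + 1) := by
    rintro a ⟨haU, -⟩ b ⟨hbU, -⟩ - hgap
    have hIoo : Set.Ioo a b ⊆ connectedComponentIn (M.approx k) x :=
      Set.Ioo_subset_Icc_self.trans (isPreconnected_connectedComponentIn.ordConnected.out haU hbU)
    refine M.sub_le_two_mul_tsum_totalGap hn' (fun j => hΔnonneg (j + 1)) hsum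
      (hIoo.trans (connectedComponentIn_subset _ _)) ?_
    rwa [← Set.inter_eq_left.mpr hIoo, Set.inter_assoc]
  have hbound : 2 * ∑' j, totalGap n r (k + j + 1) ≤ 2 / (γ - 1) * totalGap n r k := by
    rw [div_mul_eq_mul_div, mul_div_assoc]
    exact mul_le_mul_of_nonneg_left htsum zero_le_two
  refine ⟨hgap, hbound, deltaConnected_of_gap_le
    (((M.isClosed_approx k).connectedComponentIn x).inter M.isClosed_moranSet)
    (fun a ha b hb hab h => (hgap a ha b hb hab h).trans hbound) ?_⟩
  exact mul_pos (div_pos two_pos (by linarith)) (hΔ k hk)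

/-- **Components of approximations are well-chained.** If `Δ_k > 0` for all `k` and
`γ = inf Δ_k/Δ_{k+1} > 1`, then for every `k ≥ 1` and every connected component `U`
of `E_k`, every complementary gap of `U ∩ E` has length at most
`2 Σ_{j≥1} Δ_{k+j} ≤ (2/(γ-1)) Δ_k`; in particular `U ∩ E` is
`(2/(γ-1)) Δ_k`-connected. -/
theorem moran_component_deltaConnected
    (n : ℕ → ℕ) (r : ℕ → ℝ)
    (hn : ∀ k ≥ 1, 2 ≤ n k)
    (hr : ∀ k ≥ 1, 0 < r k ∧ (n k : ℝ) * r k ≤ 1)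
    (M : MoranStructure n r)
    (hΔ : ∀ k ≥ 1, 0 < totalGap n r k)
    (γ : ℝ)
    (hγdef : γ = sInf {x : ℝ | ∃ k ≥ 1, x = totalGap n r k / totalGap n r (k + 1)})
    (hγ : 1 < γ) :
    ∀ k ≥ 1, ∀ U : Set ℝ, IsCC (M.approx k) U →
      (∀ a ∈ U ∩ M.moranSet, ∀ b ∈ U ∩ M.moranSet, a < b →
        Set.Ioo a b ∩ (U ∩ M.moranSet) = ∅ →
        b - a ≤ 2 * ∑' j : ℕ, totalGap n r (k + j + 1)) ∧
      2 * ∑' j : ℕ, totalGap n r (k + j + 1) ≤ 2 / (γ - 1) * totalGap n r k ∧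
      DeltaConnected (2 / (γ - 1) * totalGap n r k) (U ∩ M.moranSet) :=
  moran_component_deltaConnected_general n r hn M hΔ γ hγdef hγ
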